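/- With Δ_{ijk} = det(v(x_i), v(x_j), v(x_k)) for v(t)=(1,t,t^2), one has Δ_{123}Δ_{456} = -(1/2)(X_{12,34,56} + X_{13,25,46} - X_{14,26,35} + X_{15,24,36} - X_{16,23,45}). -/

import Mathlib

open Matrix

/-- The Veronese vector `v(t) = (1, t, t²)`. -/
def veronese {R : Type*} [CommRing R] (t : R) : Fin 3 → R := ![1, t, t ^ 2]

/-- The Vandermonde determinant `Δ_{ijk} = det(v(x_i), v(x_j), v(x_k))`. -/
def Dlt {R : Type*} [CommRing R] (a b c : R) : R :=
  Matrix.det (Matrix.of ![veronese a, veronese b, veronese c])ᵀ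

/-- `X_{(ab,cd,ef)} = det(v(x_a)×v(x_b), v(x_c)×v(x_d), v(x_e)×v(x_f))`. -/
def Xpoly {R : Type*} [CommRing R] (a b c d e f : R) : R :=
  Matrix.det (Matrix.of ![crossProduct (veronese a) (veronese b),
    crossProduct (veronese c) (veronese d), crossProduct (veronese e) (veronese f)])ᵀ

/-! Both sides carry Vandermonde factors that can be pulled out: `Δ_{abc} = (b-a)(c-a)(c-b)`, and
`v(a) × v(b) = (b-a)·(ab, -(a+b), 1)`, the second factor being the chord of the conic `t ↦ v(t)`
through `v(a)` and `v(b)`. After this factorisation both sides are explicit polynomials in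
`x₁, …, x₆`, and the identity is checked by normalisation. -/

section

variable {R : Type*} [CommRing R]

/-- The line through `v(a)` and `v(b)`: its pairing with `v(t)` is `(t - a)(t - b)`. -/
def chord (a b : R) : Fin 3 → R := ![a * b, -(a + b), 1]

theorem veronese_cross_veronese (a b : R) :
    veronese a ⨯₃ veronese b = (b - a) • chord a b := by
  ext i
  fin_cases i <;> simp [veronese, chord, cross_apply] <;> ring

theorem Dlt_eq (a b c : R) : Dlt a b c = (b - a) * (c - a) * (c - b) := by
  have h_vandermonde :
      (of ![veronese a, veronese b, veronese c])ᵀ = (vandermonde ![a, b, c])ᵀ := by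
    ext i j
    fin_cases i <;> fin_cases j <;> simp [veronese, vandermonde]
  have hIoi0 : Finset.Ioi (0 : Fin 3) = {1, 2} := by decide
  have hIoi1 : Finset.Ioi (1 : Fin 3) = {2} := by decide
  have hIoi2 : Finset.Ioi (2 : Fin 3) = ∅ := by decide
  rw [Dlt, h_vandermonde, det_transpose, det_vandermonde]
  simp [Fin.prod_univ_three, hIoi0, hIoi1, hIoi2]

theorem Xpoly_eq (a b c d e f : R) :
    Xpoly a b c d e f =
      (b - a) * (d - c) * (f - e) * det (of ![chord a b, chord c d, chord e f]) := by
  rw [Xpoly, det_transpose, veronese_cross_veronese, veronese_cross_veronese,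
    veronese_cross_veronese]
  simp only [det_fin_three, of_apply, cons_val', Pi.smul_apply, smul_eq_mul, cons_val_fin_one,
    cons_val_zero, cons_val_one, cons_val]
  ring

end

/-- `Δ₁₂₃Δ₄₅₆ = -½(X₁₂,₃₄,₅₆ + X₁₃,₂₅,₄₆ - X₁₄,₂₆,₃₅ + X₁₅,₂₄,₃₆ - X₁₆,₂₃,₄₅)`. -/
theorem Delta123_456 (x1 x2 x3 x4 x5 x6 : ℚ) :
    Dlt x1 x2 x3 * Dlt x4 x5 x6 =
      -((1 / 2) * (Xpoly x1 x2 x3 x4 x5 x6 + Xpoly x1 x3 x2 x5 x4 x6 - Xpoly x1 x4 x2 x6 x3 x5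
        + Xpoly x1 x5 x2 x4 x3 x6 - Xpoly x1 x6 x2 x3 x4 x5)) := by
  simp only [Dlt_eq, Xpoly_eq, chord, det_fin_three, of_apply, cons_val', cons_val_zero,
    cons_val_fin_one, cons_val_one, cons_val]
  ring
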